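/- arXiv:math/0211002 — 2 statements merged into one kernel-verified Lean document; each statement's English description precedes it below -/
import Mathlib

section
/- The unitary operator U_A satisfies the pentagon (multiplicativity) equation U₁₂ U₁₃ U₂₃ = U₂₃ U₁₂ on ℋ ⊗ ℋ ⊗ ℋ, where U₁₂, U₁₃, U₂₃ denote the standard leg numbering of U_A. -/
open MeasureTheory
noncomputable section

/-- ℝⁿ -/
abbrev Rn (n : ℕ) := Fin n → ℝ

/-- η_λ(r) = (e^{2λr} − 1)/(2λ) -/
def eta (l r : ℝ) : ℝ := (Real.exp (2 * l * r) - 1) / (2 * l)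

/-- ē(t) = e^{−2πit} -/
def ebar (t : ℝ) : ℂ := Complex.exp (-2 * Real.pi * t * Complex.I)

/-- standard inner product β on ℝⁿ -/
def beta {n : ℕ} (x y : Rn n) : ℝ := ∑ i, x i * y i

/-- membership in 𝒜: Schwartz in (x,y,r), compactly supported in r -/
def IsA {n : ℕ} (f : Rn n → Rn n → ℝ → ℂ) : Prop :=
  (∃ F : SchwartzMap ((Rn n × Rn n) × ℝ) ℂ, ∀ x y r, f x y r = F ((x, y), r)) ∧
  (∃ C : ℝ, ∀ x y r, f x y r ≠ 0 → |r| ≤ C)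

/-- twisted convolution product -/
def tMul {n : ℕ} (l : ℝ) (f g : Rn n → Rn n → ℝ → ℂ) : Rn n → Rn n → ℝ → ℂ :=
  fun x y r => ∫ xt : Rn n, ∫ yt : Rn n,
    f xt yt r * g (x - xt) (y - yt) r * ebar (eta l r * beta xt (y - yt))

/-- twisted involution -/
def tStar {n : ℕ} (l : ℝ) (f : Rn n → Rn n → ℝ → ℂ) : Rn n → Rn n → ℝ → ℂ :=
  fun x y r => (starRingEnd ℂ) (f (-x) (-y) r) * ebar (eta l r * beta x y)

/-- φ(f) = ∫ f(0,0,r) dr -/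
def PhiF {n : ℕ} (f : Rn n → Rn n → ℝ → ℂ) : ℂ := ∫ r : ℝ, f 0 0 r

/-- continuous with compact support (as a function of all variables) -/
def CC {n : ℕ} (ξ : Rn n → Rn n → ℝ → ℂ) : Prop :=
  Continuous (fun p : (Rn n × Rn n) × ℝ => ξ p.1.1 p.1.2 p.2) ∧
  HasCompactSupport (fun p : (Rn n × Rn n) × ℝ => ξ p.1.1 p.1.2 p.2)

/-- L² inner product ⟨f,g⟩ (linear in the first variable, conjugate in the second) -/
def ip {n : ℕ} (f g : Rn n → Rn n → ℝ → ℂ) : ℂ :=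
  ∫ x : Rn n, ∫ y : Rn n, ∫ r : ℝ, f x y r * (starRingEnd ℂ) (g x y r)

/-- the regular representation L_f ξ (same integral formula as the twisted product) -/
def Lop {n : ℕ} (l : ℝ) (f ξ : Rn n → Rn n → ℝ → ℂ) : Rn n → Rn n → ℝ → ℂ :=
  tMul l f ξ

/-- functions of two triples of variables (elements of ℋ ⊗ ℋ, as functions) -/
abbrev F6 (n : ℕ) := Rn n → Rn n → ℝ → Rn n → Rn n → ℝ → ℂ

/-- the multiplicative unitary U_A -/
def Uop {n : ℕ} (l : ℝ) (ξ : F6 n) : F6 n :=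
  fun x y r x' y' r' =>
    (((Real.exp (-l * r')) ^ n : ℝ) : ℂ) *
      ebar (eta l r' * beta (Real.exp (-l * r') • x) (y' - Real.exp (-l * r') • y)) *
      ξ (Real.exp (-l * r') • x) (Real.exp (-l * r') • y) (r + r')
        (x' - Real.exp (-l * r') • x) (y' - Real.exp (-l * r') • y) r'

/-- uncurrying of a six-variable function -/
def unc6 {n : ℕ} (ξ : F6 n) :
    ((Rn n × Rn n) × ℝ) × ((Rn n × Rn n) × ℝ) → ℂ :=
  fun p => ξ p.1.1.1 p.1.1.2 p.1.2 p.2.1.1 p.2.1.2 p.2.2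

/-- functions of three triples of variables (elements of ℋ ⊗ ℋ ⊗ ℋ) -/
abbrev F9 (n : ℕ) :=
  Rn n → Rn n → ℝ → Rn n → Rn n → ℝ → Rn n → Rn n → ℝ → ℂ

/-- leg 12 of U_A -/
def U12 {n : ℕ} (l : ℝ) (ξ : F9 n) : F9 n :=
  fun x1 y1 r1 x2 y2 r2 x3 y3 r3 =>
    Uop l (fun a b c d e f => ξ a b c d e f x3 y3 r3) x1 y1 r1 x2 y2 r2

/-- leg 23 of U_A -/
def U23 {n : ℕ} (l : ℝ) (ξ : F9 n) : F9 n :=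
  fun x1 y1 r1 x2 y2 r2 x3 y3 r3 =>
    Uop l (fun a b c d e f => ξ x1 y1 r1 a b c d e f) x2 y2 r2 x3 y3 r3

/-- leg 13 of U_A -/
def U13 {n : ℕ} (l : ℝ) (ξ : F9 n) : F9 n :=
  fun x1 y1 r1 x2 y2 r2 x3 y3 r3 =>
    Uop l (fun a b c d e f => ξ a b c x2 y2 r2 d e f) x1 y1 r1 x3 y3 r3

lemma ebar_add (a b : ℝ) : ebar (a + b) = ebar a * ebar b := by
  unfold ebar; rw [← Complex.exp_add]; congr 1; push_cast; ring

lemma beta_smul_left {n : ℕ} (a : ℝ) (x y : Rn n) : beta (a • x) y = a * beta x y := by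
  unfold beta; rw [Finset.mul_sum]; exact Finset.sum_congr rfl fun i _ => by
    simp [mul_assoc]

lemma beta_smul_right {n : ℕ} (a : ℝ) (x y : Rn n) : beta x (a • y) = a * beta x y := by
  unfold beta; rw [Finset.mul_sum]; exact Finset.sum_congr rfl fun i _ => by
    simp; ring

lemma beta_sub_left {n : ℕ} (x y z : Rn n) : beta (x - y) z = beta x z - beta y z := by
  unfold beta; rw [← Finset.sum_sub_distrib]; exact Finset.sum_congr rfl fun i _ => by
    simp [sub_mul]

lemma beta_sub_right {n : ℕ} (x y z : Rn n) : beta x (y - z) = beta x y - beta x z := by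
  unfold beta; rw [← Finset.sum_sub_distrib]; exact Finset.sum_congr rfl fun i _ => by
    simp [mul_sub]

lemma eta_key (l r2 r3 : ℝ) :
    eta l (r2 + r3) * (Real.exp (-l * r3) * Real.exp (-l * r3)) =
      eta l r2 + eta l r3 * (Real.exp (-l * r3) * Real.exp (-l * r3)) := by
  unfold eta
  have h1 : Real.exp (2 * l * r3) * (Real.exp (-l * r3) * Real.exp (-l * r3)) = 1 := by
    rw [← Real.exp_add, ← Real.exp_add, ← Real.exp_zero]; congr 1; ring
  have h2 : Real.exp (2 * l * (r2 + r3)) * (Real.exp (-l * r3) * Real.exp (-l * r3)) =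
      Real.exp (2 * l * r2) := by
    rw [← Real.exp_add, ← Real.exp_add]; congr 1; ring
  linear_combination (h2 - h1) / (2 * l)

lemma final_aux (c1 c2 c3 d1 d2 X : ℂ) (p1 p2 p3 q1 q2 : ℝ)
    (hc : c1 * c2 * c3 = d1 * d2) (hp : p1 + p2 + p3 = q1 + q2) :
    c1 * ebar p1 * (c2 * ebar p2 * (c3 * ebar p3 * X)) = d1 * ebar q1 * (d2 * ebar q2 * X) := by
  have he : ebar p1 * ebar p2 * ebar p3 = ebar q1 * ebar q2 := by
    rw [← ebar_add, ← ebar_add, hp, ebar_add]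
  calc c1 * ebar p1 * (c2 * ebar p2 * (c3 * ebar p3 * X))
      = (c1 * c2 * c3) * (ebar p1 * ebar p2 * ebar p3) * X := by ring
    _ = (d1 * d2) * (ebar q1 * ebar q2) * X := by rw [hc, he]
    _ = d1 * ebar q1 * (d2 * ebar q2 * X) := by ring

/-- the pentagon equation U₁₂U₁₃U₂₃ = U₂₃U₁₂ -/
theorem Uop_pentagon (n : ℕ) (l : ℝ) (ξ : F9 n) :
    U12 l (U13 l (U23 l ξ)) = U23 l (U12 l ξ) := by
  funext x1 y1 r1 x2 y2 r2 x3 y3 r3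
  simp only [U12, U13, U23, Uop, smul_sub, smul_smul]
  rw [show Real.exp (-l * (r2 + r3)) = Real.exp (-l * r3) * Real.exp (-l * r2) by
    rw [← Real.exp_add]; congr 1; ring]
  have hsub : ∀ a b c : Rn n, a - c - (b - c) = a - b := fun a b c => by abel
  rw [hsub, hsub, add_assoc r1 r2 r3]
  apply final_aux
  · push_cast [mul_pow]; ring
  · simp only [beta_sub_left, beta_sub_right, beta_smul_left, beta_smul_right]
    linear_combination (-(Real.exp (-l*r2) * beta x1 y2 - Real.exp (-l*r2)^2 * beta x1 y1)) * eta_key l r2 r3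
end
end

section
/- For vectors ξ, η ∈ ℋ that are continuous and compactly supported, the slice (ω_{ξ,η} ⊗ id)(U_A) equals the operator L_f, where f(x̃,ỹ,r) = ∫ ξ(x̃,ỹ,r̃+r) (e^{λr})ⁿ conj(η(e^{λr}x̃, e^{λr}ỹ, r̃)) dr̃; moreover f is continuous with compact support. -/
open MeasureTheory
noncomputable section

/-- elementary tensor ξ ⊗ ζ -/
def tens {n : ℕ} (ξ ζ : Rn n → Rn n → ℝ → ℂ) : F6 n :=
  fun x y r x' y' r' => ξ x y r * ζ x' y' r'

/-- the inner product of ℋ ⊗ ℋ -/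
def ip6 {n : ℕ} (Ξ Θ : F6 n) : ℂ :=
  ∫ x : Rn n, ∫ y : Rn n, ∫ r : ℝ, ∫ x' : Rn n, ∫ y' : Rn n, ∫ r' : ℝ,
    Ξ x y r x' y' r' * (starRingEnd ℂ) (Θ x y r x' y' r')

/-!
Both pairings are absolutely convergent integrals over `(ℝⁿ × ℝⁿ × ℝ)²` of continuous compactly
supported functions. Inserting the formula for `f` into `⟨L_f ζ, ζ'⟩` gives the integral of
`pairingKernel`. In `⟨U_A (ξ ⊗ ζ), η ⊗ ζ'⟩`, integrate first over the variables `(x, y, r)` of the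
first factor and substitute `(x, y) ↦ e^{-λr'} (x, y)`: the Jacobian `e^{2nλr'}` against the factor
`e^{-nλr'}` of `U_A` leaves `e^{nλr'}`, and the integrand becomes `pairingKernel` again.
That `f` is continuous with compact support holds because its integrand is, jointly in `(x, y, r)`
and `r̃`: the `r̃`-support is bounded by that of `η`.
-/

section ParametricIntegral

variable {X Y E : Type*} [TopologicalSpace X] [TopologicalSpace Y] [MeasurableSpace Y]
  [NormedAddCommGroup E] [NormedSpace ℝ E] {μ : Measure Y} {g : X × Y → E}

theorem continuous_integral_of_hasCompactSupport [FirstCountableTopology X]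
    [LocallyCompactSpace X] [OpensMeasurableSpace Y] [SecondCountableTopologyEither Y E]
    [IsLocallyFiniteMeasure μ] (hg : Continuous g) (hs : HasCompactSupport g) :
    Continuous fun x => ∫ y, g (x, y) ∂μ := by
  have hK : IsCompact (Prod.snd '' tsupport g) := hs.image continuous_snd
  have hzero : ∀ x, ∀ y ∉ Prod.snd '' tsupport g, g (x, y) = 0 := fun x y hy =>
    image_eq_zero_of_notMem_tsupport fun h => hy ⟨(x, y), h, rfl⟩
  refine (continuous_parametric_integral_of_continuous (μ := μ) (f := fun x y => g (x, y)) hg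
    hK).congr fun x => ?_
  exact setIntegral_eq_integral_of_forall_compl_eq_zero (hzero x)

theorem hasCompactSupport_integral [T2Space X] (hs : HasCompactSupport g) :
    HasCompactSupport fun x => ∫ y, g (x, y) ∂μ := by
  refine (hs.image continuous_fst).closure_of_subset fun x hx => ?_
  by_contra hx'
  refine hx (integral_eq_zero_of_ae (Filter.Eventually.of_forall fun y => ?_))
  exact image_eq_zero_of_notMem_tsupport fun h => hx' ⟨(x, y), h, rfl⟩

end ParametricIntegral

section IteratedIntegral

variable {α β γ α' β' γ' E : Type*} [MeasurableSpace α] [MeasurableSpace β] [MeasurableSpace γ]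
  [MeasurableSpace α'] [MeasurableSpace β'] [MeasurableSpace γ']
  [NormedAddCommGroup E] [NormedSpace ℝ E]
  {μ : Measure α} {ν : Measure β} {ρ : Measure γ} {μ' : Measure α'} {ν' : Measure β'}
  {ρ' : Measure γ'} [SFinite μ] [SFinite ν] [SFinite ρ] [SFinite μ'] [SFinite ν'] [SFinite ρ']

theorem integral_prod_prod {h : (α × β) × γ → E} (hh : Integrable h ((μ.prod ν).prod ρ)) :
    ∫ p, h p ∂((μ.prod ν).prod ρ) = ∫ x, ∫ y, ∫ z, h ((x, y), z) ∂ρ ∂ν ∂μ := by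
  rw [integral_prod _ hh, integral_prod _ hh.integral_prod_left]

theorem integral_prod_prod_prod {F : ((α × β) × γ) × ((α' × β') × γ') → E}
    (hF : Integrable F (((μ.prod ν).prod ρ).prod ((μ'.prod ν').prod ρ'))) :
    ∫ x, ∫ y, ∫ z, ∫ x', ∫ y', ∫ z', F (((x, y), z), ((x', y'), z')) ∂ρ' ∂ν' ∂μ' ∂ρ ∂ν ∂μ =
      ∫ p, ∫ q, F (p, q) ∂((μ'.prod ν').prod ρ') ∂((μ.prod ν).prod ρ) := by
  have hsection : ∀ᵐ p ∂((μ.prod ν).prod ρ),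
      ∫ q, F (p, q) ∂((μ'.prod ν').prod ρ') =
        ∫ x', ∫ y', ∫ z', F (p, ((x', y'), z')) ∂ρ' ∂ν' ∂μ' :=
    hF.prod_right_ae.mono fun _ hp => integral_prod_prod hp
  rw [← integral_prod_prod (hF.integral_prod_left.congr hsection), integral_congr_ae hsection]

end IteratedIntegral

theorem integral_comp_smul_fst {E Y F : Type*} [NormedAddCommGroup E] [NormedSpace ℝ E]
    [FiniteDimensional ℝ E] [MeasurableSpace E] [BorelSpace E] (μ : Measure E)
    [μ.IsAddHaarMeasure] [MeasurableSpace Y] (ν : Measure Y) [SFinite ν]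
    [NormedAddCommGroup F] [NormedSpace ℝ F] (g : E × Y → F) {c : ℝ} (hc : c ≠ 0) :
    ∫ p, g (c • p.1, p.2) ∂(μ.prod ν) =
      |(c ^ Module.finrank ℝ E)⁻¹| • ∫ p, g p ∂(μ.prod ν) := by
  let e : E × Y ≃ᵐ E × Y :=
    (Homeomorph.smulOfNeZero c hc).toMeasurableEquiv.prodCongr (MeasurableEquiv.refl Y)
  have hmap : (μ.prod ν).map e = ENNReal.ofReal |(c ^ Module.finrank ℝ E)⁻¹| • μ.prod ν := by
    rw [← Measure.prod_smul_left, ← Measure.map_addHaar_smul μ hc, ← Measure.map_id (μ := ν),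
      Measure.map_prod_map _ _ (measurable_const_smul c) measurable_id, Measure.map_id]
    rfl
  calc ∫ p, g (c • p.1, p.2) ∂(μ.prod ν) = ∫ p, g (e p) ∂(μ.prod ν) := rfl
    _ = _ := by
      rw [← integral_map_equiv e, hmap, integral_smul_measure,
        ENNReal.toReal_ofReal (abs_nonneg _)]

abbrev Triple (n : ℕ) := (Rn n × Rn n) × ℝ

instance isAddHaarMeasure_volume_prod_rn (n : ℕ) :
    (volume : Measure (Rn n × Rn n)).IsAddHaarMeasure :=
  Measure.prod.instIsAddHaarMeasure _ _

@[fun_prop]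
theorem continuous_ebar : Continuous ebar := by
  unfold ebar
  fun_prop

@[fun_prop]
theorem continuous_eta (l : ℝ) : Continuous (eta l) := by
  unfold eta
  fun_prop

@[fun_prop]
theorem continuous_beta {n : ℕ} : Continuous fun p : Rn n × Rn n => beta p.1 p.2 := by
  unfold beta
  fun_prop

section

variable {n : ℕ}

theorem CC.continuous_comp {ξ : Rn n → Rn n → ℝ → ℂ} (hξ : CC ξ) {X : Type*}
    [TopologicalSpace X] {a b : X → Rn n} {c : X → ℝ} (ha : Continuous a) (hb : Continuous b)
    (hc : Continuous c) : Continuous fun x => ξ (a x) (b x) (c x) :=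
  hξ.1.comp ((ha.prodMk hb).prodMk hc)

def pairingIntegrand (Ξ Θ : F6 n) : F6 n :=
  fun x y r x' y' r' => Ξ x y r x' y' r' * starRingEnd ℂ (Θ x y r x' y' r')

def sliceKernel (l : ℝ) (ξ η : Rn n → Rn n → ℝ → ℂ) (x y : Rn n) (r rt : ℝ) : ℂ :=
  ξ x y (rt + r) * (((Real.exp (l * r)) ^ n : ℝ) : ℂ) *
    starRingEnd ℂ (η (Real.exp (l * r) • x) (Real.exp (l * r) • y) rt)

/-- The integrand of `⟨L_f ζ, ζ'⟩` once the formula for `f` is inserted; the substitution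
`(x, y) ↦ e^{-λr'} (x, y)` turns the integrand of `⟨U_A (ξ ⊗ ζ), η ⊗ ζ'⟩` into it. -/
def pairingKernel (l : ℝ) (ξ η ζ ζ' : Rn n → Rn n → ℝ → ℂ) : F6 n :=
  fun xt yt rt x' y' r' =>
    sliceKernel l ξ η xt yt r' rt * starRingEnd ℂ (ζ' x' y' r') *
      (ζ (x' - xt) (y' - yt) r' * ebar (eta l r' * beta xt (y' - yt)))

variable (l : ℝ) {ξ η ζ ζ' : Rn n → Rn n → ℝ → ℂ}

theorem continuous_sliceKernel (hξ : CC ξ) (hη : CC η) :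
    Continuous fun q : Triple n × ℝ => sliceKernel l ξ η q.1.1.1 q.1.1.2 q.1.2 q.2 := by
  unfold sliceKernel
  have hξ' : Continuous fun q : Triple n × ℝ => ξ q.1.1.1 q.1.1.2 (q.2 + q.1.2) :=
    hξ.continuous_comp (by fun_prop) (by fun_prop) (by fun_prop)
  have hη' : Continuous fun q : Triple n × ℝ =>
      η (Real.exp (l * q.1.2) • q.1.1.1) (Real.exp (l * q.1.2) • q.1.1.2) q.2 :=
    hη.continuous_comp (by fun_prop) (by fun_prop) (by fun_prop)
  exact (hξ'.mul (by fun_prop)).mul (Complex.continuous_conj.comp hη')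

theorem hasCompactSupport_sliceKernel (hξ : CC ξ) (hη : CC η) :
    HasCompactSupport fun q : Triple n × ℝ => sliceKernel l ξ η q.1.1.1 q.1.1.2 q.1.2 q.2 := by
  refine ((hξ.2.prod (hη.2.image continuous_snd)).image
    (f := fun s : Triple n × ℝ => ((s.1.1, s.1.2 - s.2), s.2)) (by fun_prop)).closure_of_subset ?_
  rintro ⟨⟨⟨x, y⟩, r⟩, rt⟩ h
  have hξ0 : ξ x y (rt + r) ≠ 0 := left_ne_zero_of_mul (left_ne_zero_of_mul h)
  have hη0 : η (Real.exp (l * r) • x) (Real.exp (l * r) • y) rt ≠ 0 :=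
    fun h0 => h (by simp [sliceKernel, h0])
  exact ⟨(((x, y), rt + r), rt), ⟨subset_tsupport _ hξ0,
    ((Real.exp (l * r) • x, Real.exp (l * r) • y), rt), subset_tsupport _ hη0, rfl⟩, by simp⟩

theorem CC.integral_sliceKernel (hξ : CC ξ) (hη : CC η) :
    CC fun x y r => ∫ rt, sliceKernel l ξ η x y r rt :=
  ⟨continuous_integral_of_hasCompactSupport (continuous_sliceKernel l hξ hη)
      (hasCompactSupport_sliceKernel l hξ hη),
    hasCompactSupport_integral (hasCompactSupport_sliceKernel l hξ hη)⟩

theorem integrable_pairingKernel (hξ : CC ξ) (hη : CC η) (hζ : CC ζ) (hζ' : CC ζ') :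
    Integrable (unc6 (pairingKernel l ξ η ζ ζ')) := by
  have hK : Continuous fun q : Triple n × Triple n =>
      sliceKernel l ξ η q.1.1.1 q.1.1.2 q.2.2 q.1.2 :=
    (continuous_sliceKernel l hξ hη).comp
      (f := fun q : Triple n × Triple n => ((q.1.1, q.2.2), q.1.2)) (by fun_prop)
  have hζ0 : Continuous fun q : Triple n × Triple n =>
      ζ (q.2.1.1 - q.1.1.1) (q.2.1.2 - q.1.1.2) q.2.2 :=
    hζ.continuous_comp (by fun_prop) (by fun_prop) (by fun_prop)
  have hζ'0 : Continuous fun q : Triple n × Triple n => ζ' q.2.1.1 q.2.1.2 q.2.2 :=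
    hζ'.continuous_comp (by fun_prop) (by fun_prop) (by fun_prop)
  refine Continuous.integrable_of_hasCompactSupport ?_ ?_
  · exact (hK.mul (Complex.continuous_conj.comp hζ'0)).mul (hζ0.mul (by fun_prop))
  refine (((hasCompactSupport_sliceKernel l hξ hη).prod hζ'.2).image
    (f := fun s : (Triple n × ℝ) × Triple n => ((s.1.1.1, s.1.2), s.2))
    (by fun_prop)).closure_of_subset ?_
  rintro ⟨⟨⟨xt, yt⟩, rt⟩, ⟨⟨x', y'⟩, r'⟩⟩ h
  have hK0 : sliceKernel l ξ η xt yt r' rt ≠ 0 := left_ne_zero_of_mul (left_ne_zero_of_mul h)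
  have hζ'0 : ζ' x' y' r' ≠ 0 := fun h0 => h (by simp [unc6, pairingKernel, h0])
  exact ⟨((((xt, yt), r'), rt), ((x', y'), r')), ⟨subset_tsupport _ hK0, subset_tsupport _ hζ'0⟩,
    rfl⟩

theorem integrable_pairingIntegrand_Uop (hξ : CC ξ) (hη : CC η) (hζ : CC ζ) (hζ' : CC ζ') :
    Integrable (unc6 (pairingIntegrand (Uop l (tens ξ ζ)) (tens η ζ'))) := by
  have hξ0 : Continuous fun q : Triple n × Triple n =>
      ξ (Real.exp (-l * q.2.2) • q.1.1.1) (Real.exp (-l * q.2.2) • q.1.1.2) (q.1.2 + q.2.2) :=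
    hξ.continuous_comp (by fun_prop) (by fun_prop) (by fun_prop)
  have hζ0 : Continuous fun q : Triple n × Triple n =>
      ζ (q.2.1.1 - Real.exp (-l * q.2.2) • q.1.1.1) (q.2.1.2 - Real.exp (-l * q.2.2) • q.1.1.2)
        q.2.2 :=
    hζ.continuous_comp (by fun_prop) (by fun_prop) (by fun_prop)
  have hη0 : Continuous fun q : Triple n × Triple n => η q.1.1.1 q.1.1.2 q.1.2 :=
    hη.continuous_comp (by fun_prop) (by fun_prop) (by fun_prop)
  have hζ'0 : Continuous fun q : Triple n × Triple n => ζ' q.2.1.1 q.2.1.2 q.2.2 :=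
    hζ'.continuous_comp (by fun_prop) (by fun_prop) (by fun_prop)
  have hphase : Continuous fun q : Triple n × Triple n =>
      (((Real.exp (-l * q.2.2)) ^ n : ℝ) : ℂ) * ebar (eta l q.2.2 *
        beta (Real.exp (-l * q.2.2) • q.1.1.1) (q.2.1.2 - Real.exp (-l * q.2.2) • q.1.1.2)) := by
    fun_prop
  refine Continuous.integrable_of_hasCompactSupport ?_ ?_
  · exact (hphase.mul (hξ0.mul hζ0)).mul (Complex.continuous_conj.comp (hη0.mul hζ'0))
  refine (hη.2.prod hζ'.2).closure_of_subset ?_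
  rintro ⟨⟨⟨x, y⟩, r⟩, ⟨⟨x', y'⟩, r'⟩⟩ h
  have h0 : η x y r * ζ' x' y' r' ≠ 0 := fun h0 => h (by simp [unc6, pairingIntegrand, tens, h0])
  exact ⟨subset_tsupport _ (left_ne_zero_of_mul h0), subset_tsupport _ (right_ne_zero_of_mul h0)⟩

theorem pairingIntegrand_Uop_eq (p b : Triple n) :
    unc6 (pairingIntegrand (Uop l (tens ξ ζ)) (tens η ζ')) (p, b) =
      ((Real.exp (-l * b.2) ^ (n + n) : ℝ) : ℂ) *
        unc6 (pairingKernel l ξ η ζ ζ') ((Real.exp (-l * b.2) • p.1, p.2), b) := by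
  obtain ⟨⟨x, y⟩, r⟩ := p
  obtain ⟨⟨x', y'⟩, r'⟩ := b
  have hcancel : ∀ u : Rn n, Real.exp (l * r') • Real.exp (-l * r') • u = u := fun u => by
    rw [smul_smul, ← Real.exp_add, show l * r' + -l * r' = 0 by ring, Real.exp_zero, one_smul]
  have hpow : (Real.exp (-l * r') : ℂ) ^ n * (Real.exp (l * r') : ℂ) ^ n = 1 := by
    rw [← mul_pow]
    norm_cast
    rw [← Real.exp_add, show -l * r' + l * r' = 0 by ring, Real.exp_zero, one_pow]
  simp only [unc6, pairingIntegrand, Uop, tens, pairingKernel, sliceKernel, Prod.smul_mk,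
    hcancel, map_mul, Complex.ofReal_pow]
  linear_combination -(Real.exp (-l * r') : ℂ) ^ n *
    ebar (eta l r' * beta (Real.exp (-l * r') • x) (y' - Real.exp (-l * r') • y)) *
    ξ (Real.exp (-l * r') • x) (Real.exp (-l * r') • y) (r + r') *
    ζ (x' - Real.exp (-l * r') • x) (y' - Real.exp (-l * r') • y) r' *
    starRingEnd ℂ (η x y r) * starRingEnd ℂ (ζ' x' y' r') * hpow

theorem integral_pairingIntegrand_Uop (b : Triple n) :
    ∫ p, unc6 (pairingIntegrand (Uop l (tens ξ ζ)) (tens η ζ')) (p, b) =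
      ∫ a, unc6 (pairingKernel l ξ η ζ ζ') (a, b) := by
  set c := Real.exp (-l * b.2)
  have hc : 0 < c := Real.exp_pos _
  have hscale : ∫ a : Triple n, unc6 (pairingKernel l ξ η ζ ζ') ((c • a.1, a.2), b) =
      |(c ^ Module.finrank ℝ (Rn n × Rn n))⁻¹| • ∫ a, unc6 (pairingKernel l ξ η ζ ζ') (a, b) :=
    integral_comp_smul_fst volume volume (fun a => unc6 (pairingKernel l ξ η ζ ζ') (a, b)) hc.ne'
  simp_rw [pairingIntegrand_Uop_eq, integral_const_mul]
  rw [hscale, Module.finrank_prod, Module.finrank_fin_fun,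
    abs_of_pos (inv_pos.2 (pow_pos hc _)), Complex.real_smul, ← mul_assoc, ← Complex.ofReal_mul,
    mul_inv_cancel₀ (pow_pos hc _).ne', Complex.ofReal_one, one_mul]

theorem ip6_Uop_tens_eq_integral_pairingKernel (hξ : CC ξ) (hη : CC η) (hζ : CC ζ) (hζ' : CC ζ') :
    ip6 (Uop l (tens ξ ζ)) (tens η ζ') = ∫ b, ∫ a, unc6 (pairingKernel l ξ η ζ ζ') (a, b) := by
  have hI := integrable_pairingIntegrand_Uop l hξ hη hζ hζ'
  calc ip6 (Uop l (tens ξ ζ)) (tens η ζ')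
      = ∫ p, ∫ b, unc6 (pairingIntegrand (Uop l (tens ξ ζ)) (tens η ζ')) (p, b) :=
        integral_prod_prod_prod hI
    _ = ∫ b, ∫ p, unc6 (pairingIntegrand (Uop l (tens ξ ζ)) (tens η ζ')) (p, b) :=
        integral_integral_swap hI
    _ = _ := by simp_rw [integral_pairingIntegrand_Uop]

theorem Lop_mul_conj_eq_integral_pairingKernel (x' y' : Rn n) (r' : ℝ) :
    Lop l (fun x y r => ∫ rt, sliceKernel l ξ η x y r rt) ζ x' y' r' *
        starRingEnd ℂ (ζ' x' y' r') =
      ∫ xt, ∫ yt, ∫ rt, pairingKernel l ξ η ζ ζ' xt yt rt x' y' r' := by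
  simp only [Lop, tMul, pairingKernel, ← integral_mul_const]
  refine integral_congr_ae (.of_forall fun xt => integral_congr_ae (.of_forall fun yt =>
    integral_congr_ae (.of_forall fun rt => ?_)))
  ring

theorem ip_Lop_eq_integral_pairingKernel (hξ : CC ξ) (hη : CC η) (hζ : CC ζ) (hζ' : CC ζ') :
    ip (Lop l (fun x y r => ∫ rt, sliceKernel l ξ η x y r rt) ζ) ζ' =
      ∫ b, ∫ a, unc6 (pairingKernel l ξ η ζ ζ') (a, b) := by
  simp only [ip, Lop_mul_conj_eq_integral_pairingKernel]
  exact integral_prod_prod_prod (integrable_pairingKernel l hξ hη hζ hζ').swap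

end

/-- the slice (ω_{ξ,η} ⊗ id)(U_A) equals L_f with f as displayed,
    and f is continuous with compact support -/
theorem slice_of_UA {n : ℕ} (l : ℝ) (ξ η : Rn n → Rn n → ℝ → ℂ)
    (hξ : CC ξ) (hη : CC η) (f : Rn n → Rn n → ℝ → ℂ)
    (hform : ∀ xt yt r, f xt yt r =
      ∫ rt : ℝ, ξ xt yt (rt + r) * (((Real.exp (l * r)) ^ n : ℝ) : ℂ) *
        (starRingEnd ℂ) (η (Real.exp (l * r) • xt) (Real.exp (l * r) • yt) rt)) :
    CC f ∧
    ∀ ζ ζ' : Rn n → Rn n → ℝ → ℂ, CC ζ → CC ζ' →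
      ip6 (Uop l (tens ξ ζ)) (tens η ζ') = ip (Lop l f ζ) ζ' := by
  obtain rfl : f = fun x y r => ∫ rt, sliceKernel l ξ η x y r rt :=
    funext fun x => funext fun y => funext fun r => hform x y r
  refine ⟨hξ.integral_sliceKernel l hη, fun ζ ζ' hζ hζ' => ?_⟩
  rw [ip6_Uop_tens_eq_integral_pairingKernel l hξ hη hζ hζ',
    ip_Lop_eq_integral_pairingKernel l hξ hη hζ hζ']
end
end
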